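/- Define f on ℝ² by f := χ_E where E is the union of the squares (0,1)×(0,1) and (1,2)×(1,2). Then the iterated rearrangement of fχ_{(0,2)×(0,2)} satisfies f^*(t,s) = 1 for t ∈ (0,1), s ∈ (0,2) and f^*(t,s) = 0 for t ∈ [1,2), s ∈ (0,2). Consequently, for λ ∈ (0,1/2] and τ ∈ (1/2,1), the iterated-rearrangement lower bound ∫_{2(1-λ)}^2 ∫_{2(1-τ)}^2 f^*(t,s) ds dt = 0 is strictly less than inf_{|E'|=2λ, |G|=2τ} ∫_{E'} ∫_G f dy dx > 0. -/

import Mathlib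

open MeasureTheory Set

/-- Non-increasing rearrangement of `g` restricted to `E`. -/
noncomputable def rearrOn {α : Type*} [MeasureSpace α] (E : Set α) (g : α → ℝ) (t : ℝ) : ℝ :=
  sInf {a : ℝ | 0 < a ∧ volume {x ∈ E | a < |g x|} ≤ ENNReal.ofReal t}

/-- Iterated non-increasing rearrangement of a function of two variables restricted to `A × B`. -/
noncomputable def rearr2On {α β : Type*} [MeasureSpace α] [MeasureSpace β]
    (A : Set α) (B : Set β) (f : α × β → ℝ) (t s : ℝ) : ℝ :=
  rearrOn B (fun y => rearrOn A (fun x => f (x, y)) t) s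

/-- The characteristic function of `((0,1)×(0,1)) ∪ ((1,2)×(1,2)) ⊂ ℝ²`. -/
noncomputable def fex : ℝ × ℝ → ℝ :=
  Set.indicator ((Ioo (0:ℝ) 1 ×ˢ Ioo (0:ℝ) 1) ∪ (Ioo (1:ℝ) 2 ×ˢ Ioo (1:ℝ) 2)) 1

/-!
The rearrangement of an indicator `1_J` over `E` at level `t` is `1` if `|E ∩ J| > t` and `0`
otherwise. Each horizontal slice of `fex` is the indicator of `(0,1)` or `(1,2)` (or empty), so the
inner rearrangement is `1_{(0,1) ∪ (1,2)}(y)` for `t < 1` and vanishes for `t ≥ 1`; rearranging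
once more gives `f^*(t,s) = 1` exactly when `t < 1` and `s < 2`, and the double integral over
`t > 2(1-λ) ≥ 1` is `0`. On the other side
`∫_E ∫_G fex = |E ∩ (0,1)| |G ∩ (0,1)| + |E ∩ (1,2)| |G ∩ (1,2)|`, where `|G ∩ (0,1)|` and
`|G ∩ (1,2)|` are at least `|G| - 1 = 2τ - 1` and the two pieces of `E` fill `E` up to the
point `1`, so every admissible integral is at least `2λ(2τ - 1) > 0`.
-/

theorem rearrOn_indicator_one {α : Type*} [MeasureSpace α] (E J : Set α) (t : ℝ) :
    rearrOn E (J.indicator 1) t = if volume (E ∩ J) ≤ ENNReal.ofReal t then 0 else 1 := by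
  have level_set : ∀ a : ℝ, 0 < a →
      {x ∈ E | a < |J.indicator 1 x|} = if a < 1 then E ∩ J else ∅ := by
    intro a ha
    ext x
    by_cases hx : x ∈ J <;> split_ifs <;> simp [hx] <;> intro <;> linarith
  unfold rearrOn
  split_ifs with h
  · have admissible : {a : ℝ | 0 < a ∧ volume {x ∈ E | a < |J.indicator 1 x|} ≤ ENNReal.ofReal t}
        = Ioi 0 := by
      ext a
      refine ⟨And.left, fun ha => ⟨ha, ?_⟩⟩
      rw [level_set a ha]
      split_ifs <;> simp [h]
    rw [admissible, csInf_Ioi]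
  · have admissible : {a : ℝ | 0 < a ∧ volume {x ∈ E | a < |J.indicator 1 x|} ≤ ENNReal.ofReal t}
        = Ici 1 := by
      ext a
      refine ⟨fun ⟨ha, hvol⟩ => ?_, fun ha => ⟨by simp at ha; linarith, ?_⟩⟩
      · by_contra! ha1
        rw [level_set a ha, if_pos (by simpa using ha1)] at hvol
        exact h hvol
      · simp only [mem_Ici] at ha
        rw [level_set a (by linarith), if_neg (by linarith)]
        simp
    rw [admissible, csInf_Ici]

section MeasureLemmas

variable {α : Type*} [MeasurableSpace α] {μ : Measure α}

theorem integrable_indicator_one {J : Set α} (hJ : MeasurableSet J) (hμJ : μ J ≠ ⊤) :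
    Integrable (J.indicator (1 : α → ℝ)) μ :=
  (integrable_indicator_iff hJ).2 (integrableOn_const hμJ)

theorem setIntegral_indicator_one_mul_add {s J K : Set α} (hJ : MeasurableSet J)
    (hK : MeasurableSet K) (hμJ : μ J ≠ ⊤) (hμK : μ K ≠ ⊤) (a b : ℝ) :
    ∫ x in s, (J.indicator 1 x * a + K.indicator 1 x * b) ∂μ =
      μ.real (J ∩ s) * a + μ.real (K ∩ s) * b := by
  have finite_restrict : ∀ {L : Set α}, μ L ≠ ⊤ → μ.restrict s L ≠ ⊤ :=
    fun hL => ne_top_of_le_ne_top hL (Measure.restrict_apply_le _ _)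
  rw [integral_add ((integrable_indicator_one hJ (finite_restrict hμJ)).mul_const a)
      ((integrable_indicator_one hK (finite_restrict hμK)).mul_const b),
    integral_mul_const, integral_mul_const, integral_indicator_one hJ, integral_indicator_one hK,
    measureReal_restrict_apply hJ, measureReal_restrict_apply hK]

theorem measureReal_sub_le_measureReal_inter {A B G : Set α} (hG : G ⊆ B) (hA : A ⊆ B)
    (hA_meas : MeasurableSet A) (hμB : μ B ≠ ⊤) :
    μ.real G - (μ.real B - μ.real A) ≤ μ.real (A ∩ G) := by
  have cover : G ⊆ (A ∩ G) ∪ (B \ A) := fun x hx => by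
    by_cases hxA : x ∈ A
    exacts [Or.inl ⟨hxA, hx⟩, Or.inr ⟨hG hx, hxA⟩]
  have := calc μ.real G ≤ μ.real ((A ∩ G) ∪ (B \ A)) :=
        measureReal_mono cover (measure_ne_top_of_subset
          (union_subset (inter_subset_right.trans hG) sdiff_subset) hμB)
    _ ≤ μ.real (A ∩ G) + μ.real (B \ A) := measureReal_union_le _ _
  rw [measureReal_sdiff hA hA_meas hμB] at this
  linarith

end MeasureLemmas

local notation "I₁" => Ioo (0 : ℝ) 1
local notation "I₂" => Ioo (1 : ℝ) 2

theorem fex_apply (x y : ℝ) :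
    fex (x, y) =
      (I₁).indicator 1 x * (I₁).indicator 1 y + (I₂).indicator 1 x * (I₂).indicator 1 y := by
  have disjoint : Disjoint (I₁ ×ˢ I₁) (I₂ ×ˢ I₂) :=
    disjoint_prod.2 (Or.inl (Ioo_disjoint_Ioo.2 (by norm_num)))
  simp only [fex, indicator_union_of_disjoint disjoint, indicator_prod_one]

theorem rearrOn_fex_slice (t y : ℝ) :
    rearrOn (Ioo 0 2) (fun x => fex (x, y)) t = if y ∈ I₁ ∪ I₂ ∧ t < 1 then 1 else 0 := by
  have slice : (fun x => fex (x, y)) =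
      ((fun x => (x, y)) ⁻¹' (I₁ ×ˢ I₁ ∪ I₂ ×ˢ I₂)).indicator 1 := rfl
  rw [slice, rearrOn_indicator_one, preimage_union, mk_preimage_prod_left_eq_if,
    mk_preimage_prod_left_eq_if]
  have sub₁ : I₁ ⊆ Ioo 0 2 := Ioo_subset_Ioo_right one_le_two
  have sub₂ : I₂ ⊆ Ioo 0 2 := Ioo_subset_Ioo_left zero_le_one
  by_cases h₁ : y ∈ I₁
  · have h₂ : y ∉ I₂ := fun h₂ => h₁.2.not_gt h₂.1
    simp only [h₁, h₂, inter_eq_right.2 sub₁, mem_union, true_or, true_and, if_true, if_false,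
      union_empty, Real.volume_Ioo]
    norm_num
    split_ifs <;> linarith
  by_cases h₂ : y ∈ I₂
  · simp only [h₁, h₂, inter_eq_right.2 sub₂, mem_union, or_true, true_and, if_true, if_false,
      empty_union, Real.volume_Ioo]
    norm_num
    split_ifs <;> linarith
  · simp [h₁, h₂]

theorem rearr2On_fex (t s : ℝ) :
    rearr2On (Ioo 0 2) (Ioo 0 2) fex t s = if t < 1 ∧ s < 2 then 1 else 0 := by
  simp only [rearr2On, rearrOn_fex_slice]
  by_cases ht : t < 1
  · have inner :
        (fun y => if y ∈ I₁ ∪ I₂ ∧ t < 1 then (1 : ℝ) else 0) = (I₁ ∪ I₂).indicator 1 := by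
      ext y
      simp [indicator_apply, ht]
    have volume_union : volume (Ioo 0 2 ∩ (I₁ ∪ I₂)) = 2 := by
      rw [inter_eq_right.2 (union_subset (Ioo_subset_Ioo_right one_le_two)
        (Ioo_subset_Ioo_left zero_le_one)), measure_union (Ioo_disjoint_Ioo.2 (by norm_num))
        measurableSet_Ioo, Real.volume_Ioo, Real.volume_Ioo]
      norm_num
    rw [inner, rearrOn_indicator_one, volume_union]
    simp only [ENNReal.ofNat_le_ofReal, ht, true_and]
    split_ifs <;> linarith
  · have inner :
        (fun y => if y ∈ I₁ ∪ I₂ ∧ t < 1 then (1 : ℝ) else 0) = (∅ : Set ℝ).indicator 1 := by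
      ext y
      simp [ht]
    rw [inner, rearrOn_indicator_one]
    simp [ht]

theorem setIntegral_setIntegral_fex (E G : Set ℝ) :
    ∫ x in E, ∫ y in G, fex (x, y) =
      volume.real (I₁ ∩ E) * volume.real (I₁ ∩ G) +
        volume.real (I₂ ∩ E) * volume.real (I₂ ∩ G) := by
  have inner : ∀ x, ∫ y in G, fex (x, y) =
      (I₁).indicator 1 x * volume.real (I₁ ∩ G) + (I₂).indicator 1 x * volume.real (I₂ ∩ G) := by
    intro x
    simp_rw [fex_apply, mul_comm ((I₁).indicator 1 x), mul_comm ((I₂).indicator 1 x)]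
    rw [setIntegral_indicator_one_mul_add measurableSet_Ioo measurableSet_Ioo (by simp) (by simp)]
  simp_rw [inner]
  exact setIntegral_indicator_one_mul_add measurableSet_Ioo measurableSet_Ioo (by simp) (by simp)
    _ _

theorem volume_real_le_inter_add_inter_of_subset_Ioo {E : Set ℝ} (hE : E ⊆ Ioo 0 2) :
    volume.real E ≤ volume.real (I₁ ∩ E) + volume.real (I₂ ∩ E) := by
  set S : Set ℝ := (I₁ ∩ E) ∪ (I₂ ∩ E)
  have cover : E ⊆ insert 1 S := fun x hx => by
    rcases lt_trichotomy x 1 with h | h | h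
    exacts [Or.inr (Or.inl ⟨⟨(hE hx).1, h⟩, hx⟩), Or.inl h, Or.inr (Or.inr ⟨⟨h, (hE hx).2⟩, hx⟩)]
  have finite : volume S ≠ ⊤ :=
    measure_ne_top_of_subset ((union_subset inter_subset_right inter_subset_right).trans hE)
      (by simp)
  have null_point : (insert (1 : ℝ) S : Set ℝ) =ᵐ[volume] S := insert_ae_eq_self _ _
  calc volume.real E ≤ volume.real (insert 1 S) :=
        measureReal_mono cover (by rwa [measure_congr null_point])
    _ = volume.real S := measureReal_congr null_point
    _ ≤ volume.real (I₁ ∩ E) + volume.real (I₂ ∩ E) := measureReal_union_le _ _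

theorem volume_real_mul_sub_one_le_setIntegral_setIntegral_fex {E G : Set ℝ}
    (hE : E ⊆ Ioo 0 2) (hG : G ⊆ Ioo 0 2) :
    volume.real E * (volume.real G - 1) ≤ ∫ x in E, ∫ y in G, fex (x, y) := by
  have finite : volume (Ioo (0 : ℝ) 2) ≠ ⊤ := by simp
  have hG₁ := measureReal_sub_le_measureReal_inter hG (Ioo_subset_Ioo_right one_le_two)
    measurableSet_Ioo finite
  have hG₂ := measureReal_sub_le_measureReal_inter hG (Ioo_subset_Ioo_left zero_le_one)
    measurableSet_Ioo finite
  norm_num at hG₁ hG₂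
  have hE₁₂ := volume_real_le_inter_add_inter_of_subset_Ioo hE
  rw [setIntegral_setIntegral_fex]
  have := measureReal_nonneg (μ := volume) (s := E)
  have := measureReal_nonneg (μ := volume) (s := I₁ ∩ E)
  have := measureReal_nonneg (μ := volume) (s := I₂ ∩ E)
  have := measureReal_nonneg (μ := volume) (s := I₁ ∩ G)
  have := measureReal_nonneg (μ := volume) (s := I₂ ∩ G)
  -- for `volume.real G < 1` the left side is already nonpositive
  rcases le_total 1 (volume.real G) with hG1 | hG1 <;> nlinarith

theorem stmt_8 :
    (∀ t ∈ Ioo (0:ℝ) 1, ∀ s ∈ Ioo (0:ℝ) 2,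
      rearr2On (Ioo (0:ℝ) 2) (Ioo (0:ℝ) 2) fex t s = 1) ∧
    (∀ t ∈ Ico (1:ℝ) 2, ∀ s ∈ Ioo (0:ℝ) 2,
      rearr2On (Ioo (0:ℝ) 2) (Ioo (0:ℝ) 2) fex t s = 0) ∧
    (∀ lam ∈ Ioc (0:ℝ) (1/2), ∀ τ ∈ Ioo (1/2 : ℝ) 1,
      (∫ t in Ioo (2*(1-lam)) 2, ∫ s in Ioo (2*(1-τ)) 2,
        rearr2On (Ioo (0:ℝ) 2) (Ioo (0:ℝ) 2) fex t s) = 0 ∧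
      0 < sInf {I : ℝ | ∃ E G : Set ℝ,
        MeasurableSet E ∧ E ⊆ Ioo (0:ℝ) 2 ∧ volume E = ENNReal.ofReal (2*lam) ∧
        MeasurableSet G ∧ G ⊆ Ioo (0:ℝ) 2 ∧ volume G = ENNReal.ofReal (2*τ) ∧
        I = ∫ x in E, ∫ y in G, fex (x, y)}) := by
  refine ⟨fun t ht s hs => by simp [rearr2On_fex, ht.2, hs.2],
    fun t ht s _ => by simp [rearr2On_fex, not_lt.2 ht.1], fun lam hlam τ hτ => ⟨?_, ?_⟩⟩
  · refine setIntegral_eq_zero_of_forall_eq_zero fun t ht => ?_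
    have ht1 : ¬t < 1 := by linarith [ht.1, hlam.2]
    simp [rearr2On_fex, ht1]
  · have hlam0 : 0 ≤ 2 * lam := by linarith [hlam.1]
    have hτ0 : 0 ≤ 2 * τ := by linarith [hτ.1]
    refine (by nlinarith [hlam.1, hτ.1] : 0 < 2 * lam * (2 * τ - 1)).trans_le (le_csInf ?_ ?_)
    · exact ⟨_, Ioo 0 (2 * lam), Ioo 0 (2 * τ), measurableSet_Ioo,
        Ioo_subset_Ioo_right (by linarith [hlam.2]), by simp,
        measurableSet_Ioo, Ioo_subset_Ioo_right (by linarith [hτ.2]), by simp, rfl⟩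
    · rintro _ ⟨E, G, -, hE, hEvol, -, hG, hGvol, rfl⟩
      have := volume_real_mul_sub_one_le_setIntegral_setIntegral_fex hE hG
      rwa [measureReal_def, measureReal_def, hEvol, hGvol, ENNReal.toReal_ofReal hlam0,
        ENNReal.toReal_ofReal hτ0] at this
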